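/- Let Λ ⊆ ℝⁿ be an odd self-dual lattice with δ ∈ Λ satisfying the gauging condition, and Λ_even = {λ ∈ Λ : δ·λ ∈ 2ℤ}. Then the dual lattice of Λ_even decomposes as (Λ_even)* = Λ_even ∪ Λ_odd ∪ (Λ_even + δ/2) ∪ (Λ_odd + δ/2), a disjoint union of four cosets of Λ_even. -/
import Mathlib


open scoped BigOperators

namespace PaperFormal

/-- Standard dot product on `ℝⁿ`. -/
def dot {n : ℕ} (x y : Fin n → ℝ) : ℝ := ∑ i, x i * y i

/-- Squared norm. -/
def nsq {n : ℕ} (x : Fin n → ℝ) : ℝ := dot x x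

/-- The dual of a set of vectors: all vectors pairing integrally with every element. -/
def dualSet {n : ℕ} (L : Set (Fin n → ℝ)) : Set (Fin n → ℝ) :=
  {x | ∀ l ∈ L, ∃ k : ℤ, dot l x = (k : ℝ)}

/-- The even-norm part `Λ₀` of a lattice. -/
def evenSub {n : ℕ} (L : Set (Fin n → ℝ)) : Set (Fin n → ℝ) :=
  {l | l ∈ L ∧ ∃ k : ℤ, dot l l = 2 * (k : ℝ)}

/-- The shadow `S(Λ) = Λ₀* \ Λ`. -/
def shadow {n : ℕ} (L : Set (Fin n → ℝ)) : Set (Fin n → ℝ) :=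
  dualSet (evenSub L) \ L

/-- An odd self-dual lattice: equal to its dual, and containing a vector of odd norm. -/
def IsOddSelfDual {n : ℕ} (L : Set (Fin n → ℝ)) : Prop :=
  L = dualSet L ∧ ∃ v ∈ L, ∃ k : ℤ, dot v v = 2 * (k : ℝ) + 1

/-- `χ` is a characteristic vector of `L`: `λ·λ ≡ χ·λ (mod 2)` for all `λ ∈ L`. -/
def IsCharacteristic {n : ℕ} (L : Set (Fin n → ℝ)) (χ : Fin n → ℝ) : Prop :=
  χ ∈ L ∧ ∀ l ∈ L, ∃ k : ℤ, dot l l - dot χ l = 2 * (k : ℝ)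

/-- `Λ_{δ-even}`. -/
def deltaEven {n : ℕ} (L : Set (Fin n → ℝ)) (δ : Fin n → ℝ) : Set (Fin n → ℝ) :=
  {l | l ∈ L ∧ ∃ k : ℤ, dot δ l = 2 * (k : ℝ)}

/-- `Λ_{δ-odd}`. -/
def deltaOdd {n : ℕ} (L : Set (Fin n → ℝ)) (δ : Fin n → ℝ) : Set (Fin n → ℝ) :=
  {l | l ∈ L ∧ ∃ k : ℤ, dot δ l = 2 * (k : ℝ) + 1}

/-- Translate a set of vectors by `v`. -/
def shiftSet {n : ℕ} (A : Set (Fin n → ℝ)) (v : Fin n → ℝ) : Set (Fin n → ℝ) :=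
  (fun x => x + v) '' A

/-- The orbifold lattice `Λ⁺ = Λ_even ∪ (Λ_even + δ/2)`. -/
def orbPlus {n : ℕ} (L : Set (Fin n → ℝ)) (δ : Fin n → ℝ) : Set (Fin n → ℝ) :=
  deltaEven L δ ∪ shiftSet (deltaEven L δ) ((2 : ℝ)⁻¹ • δ)

/-- The orbifold lattice `Λ⁻ = Λ_even ∪ (Λ_odd + δ/2)`. -/
def orbMinus {n : ℕ} (L : Set (Fin n → ℝ)) (δ : Fin n → ℝ) : Set (Fin n → ℝ) :=
  deltaEven L δ ∪ shiftSet (deltaOdd L δ) ((2 : ℝ)⁻¹ • δ)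

/-- The gauging condition for a shift vector: `δ ∈ Λ`, `δ/2 ∉ Λ ∪ S(Λ)`, `δ² ∈ 4ℤ`. -/
def GaugingCondition {n : ℕ} (L : Set (Fin n → ℝ)) (δ : Fin n → ℝ) : Prop :=
  δ ∈ L ∧ (2 : ℝ)⁻¹ • δ ∉ L ∧ (2 : ℝ)⁻¹ • δ ∉ shadow L ∧
    ∃ k : ℤ, dot δ δ = 4 * (k : ℝ)

/-- Inner product of codewords, valued in `ℤ/k`. -/
def codeDot {n k : ℕ} (c c' : Fin n → ZMod k) : ZMod k := ∑ i, c i * c' i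

/-- The dual code. -/
def dualCode {n k : ℕ} (C : Set (Fin n → ZMod k)) : Set (Fin n → ZMod k) :=
  {x | ∀ c ∈ C, codeDot c x = 0}

/-- Hamming weight of a binary codeword. -/
def wt {n : ℕ} (c : Fin n → ZMod 2) : ℕ :=
  (Finset.univ.filter fun i => c i = 1).card

/-- A singly-even self-dual binary code: self-dual, with some codeword of weight `≢ 0 (mod 4)`. -/
def IsSinglyEvenSelfDual {n : ℕ} (C : Set (Fin n → ZMod 2)) : Prop :=
  C = dualCode C ∧ ∃ c ∈ C, ¬ (4 ∣ wt c)

/-- Lift of a binary codeword to `{0,1}ⁿ ⊆ ℝⁿ`. -/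
def liftBin {n : ℕ} (c : Fin n → ZMod 2) : Fin n → ℝ := fun i => ((c i).val : ℝ)

/-- Construction A lattice of a binary code: `Λ(C) = {(c + 2m)/√2}`. -/
def constructionA {n : ℕ} (C : Set (Fin n → ZMod 2)) : Set (Fin n → ℝ) :=
  {x | ∃ c ∈ C, ∃ m : Fin n → ℤ,
    x = fun i => (liftBin c i + 2 * (m i : ℝ)) / Real.sqrt 2}

/-- Construction A lattice of a `ℤ/k` code: `Λ(C) = {(c + km)/√k}`. -/
def constructionAZ {n : ℕ} (k : ℕ) (C : Set (Fin n → ZMod k)) : Set (Fin n → ℝ) :=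
  {x | ∃ c ∈ C, ∃ m : Fin n → ℤ,
    x = fun i => (((c i).val : ℝ) + (k : ℝ) * (m i : ℝ)) / Real.sqrt k}

/-- The shift vector `δ = (1,…,1)/√2`. -/
noncomputable def deltaAll (n : ℕ) : Fin n → ℝ := fun _ => 1 / Real.sqrt 2

/-- Theta function of a set of vectors, `Θ_L(q) = Σ_{λ∈L} q^{λ²/2}`. -/
noncomputable def thetaSet {n : ℕ} (L : Set (Fin n → ℝ)) (q : ℝ) : ℝ :=
  ∑' l : L, q ^ (dot (l : Fin n → ℝ) (l : Fin n → ℝ) / 2)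

/-- Jacobi theta function `θ₂(q) = Σ_m q^{(m+1/2)²/2}`. -/
noncomputable def theta2 (q : ℝ) : ℝ := ∑' m : ℤ, q ^ (((m : ℝ) + 1 / 2) ^ 2 / 2)

/-- Jacobi theta function `θ₃(q) = Σ_m q^{m²/2}`. -/
noncomputable def theta3 (q : ℝ) : ℝ := ∑' m : ℤ, q ^ ((m : ℝ) ^ 2 / 2)

/-- Jacobi theta function `θ₄(q) = Σ_m (−1)^m q^{m²/2}`. -/
noncomputable def theta4 (q : ℝ) : ℝ := ∑' m : ℤ, (-1 : ℝ) ^ m * q ^ ((m : ℝ) ^ 2 / 2)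

/-- `ℤⁿ₊`: integer vectors with even coordinate sum. -/
def intEven (n : ℕ) : Set (Fin n → ℤ) := {m | Even (∑ i, m i)}

/-- `ℤⁿ₋`: integer vectors with odd coordinate sum. -/
def intOdd (n : ℕ) : Set (Fin n → ℤ) := {m | Odd (∑ i, m i)}

/-- The doubly-even subcode `C₀` of a binary code. -/
def doublyEvenSub {n : ℕ} (C : Set (Fin n → ZMod 2)) : Set (Fin n → ZMod 2) :=
  {c | c ∈ C ∧ wt c % 4 = 0}

/-- The code shadow `S(C) = C₀⊥ \ C`. -/
def codeShadow {n : ℕ} (C : Set (Fin n → ZMod 2)) : Set (Fin n → ZMod 2) :=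
  dualCode (doublyEvenSub C) \ C

section DualAux

variable {n : ℕ}

lemma dot_comm' (x y : Fin n → ℝ) : dot x y = dot y x :=
  Finset.sum_congr rfl fun i _ => mul_comm _ _

lemma dot_add_right (l x y : Fin n → ℝ) : dot l (x + y) = dot l x + dot l y := by
  simp [dot, Pi.add_apply, mul_add, Finset.sum_add_distrib]

lemma dot_sub_right (l x y : Fin n → ℝ) : dot l (x - y) = dot l x - dot l y := by
  simp [dot, Pi.sub_apply, mul_sub, Finset.sum_sub_distrib]

lemma dot_sub_left (x y l : Fin n → ℝ) : dot (x - y) l = dot x l - dot y l := by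
  rw [dot_comm', dot_sub_right, dot_comm' l x, dot_comm' l y]

lemma dot_add_left (x y l : Fin n → ℝ) : dot (x + y) l = dot x l + dot y l := by
  rw [dot_comm', dot_add_right, dot_comm' l x, dot_comm' l y]

lemma dot_smul_right (c : ℝ) (l x : Fin n → ℝ) : dot l (c • x) = c * dot l x := by
  simp [dot, Pi.smul_apply, Finset.mul_sum, mul_left_comm]

end DualAux

/-- the dual of `Λ_even` decomposes as the disjoint union of four cosets. -/
theorem dual_deltaEven_decomposition {n : ℕ} (L : Set (Fin n → ℝ))
    (hL : IsOddSelfDual L) (δ : Fin n → ℝ) (hδ : GaugingCondition L δ) :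
    dualSet (deltaEven L δ)
      = deltaEven L δ ∪ deltaOdd L δ ∪ shiftSet (deltaEven L δ) ((2 : ℝ)⁻¹ • δ)
          ∪ shiftSet (deltaOdd L δ) ((2 : ℝ)⁻¹ • δ) ∧
    Disjoint (deltaEven L δ) (deltaOdd L δ) ∧
    Disjoint (deltaEven L δ) (shiftSet (deltaEven L δ) ((2 : ℝ)⁻¹ • δ)) ∧
    Disjoint (deltaEven L δ) (shiftSet (deltaOdd L δ) ((2 : ℝ)⁻¹ • δ)) ∧
    Disjoint (deltaOdd L δ) (shiftSet (deltaEven L δ) ((2 : ℝ)⁻¹ • δ)) ∧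
    Disjoint (deltaOdd L δ) (shiftSet (deltaOdd L δ) ((2 : ℝ)⁻¹ • δ)) ∧
    Disjoint (shiftSet (deltaEven L δ) ((2 : ℝ)⁻¹ • δ))
      (shiftSet (deltaOdd L δ) ((2 : ℝ)⁻¹ • δ)) := by
  obtain ⟨hLd, -⟩ := hL
  obtain ⟨hδL, hδ2, -, -⟩ := hδ
  -- pairing of elements of L with elements of L is integral
  have hdual : ∀ x ∈ L, ∀ l ∈ L, ∃ k : ℤ, dot l x = (k : ℝ) := by
    intro x hx; rw [hLd] at hx; exact hx
  -- L is closed under subtraction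
  have hsub : ∀ a ∈ L, ∀ b ∈ L, a - b ∈ L := by
    intro a ha b hb
    rw [hLd]
    intro l hl
    obtain ⟨k1, h1⟩ := hdual a ha l hl
    obtain ⟨k2, h2⟩ := hdual b hb l hl
    exact ⟨k1 - k2, by rw [dot_sub_right, h1, h2]; push_cast; ring⟩
  -- δ pairs integrally with L
  have hδint : ∀ l ∈ L, ∃ k : ℤ, dot δ l = (k : ℝ) := fun l hl => hdual l hl δ hδL
  -- every element of L is δ-even or δ-odd
  have hsplit : ∀ l ∈ L, l ∈ deltaEven L δ ∨ l ∈ deltaOdd L δ := by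
    intro l hl
    obtain ⟨k, hk⟩ := hδint l hl
    rcases Int.even_or_odd k with ⟨m, hm⟩ | ⟨m, hm⟩
    · exact Or.inl ⟨hl, m, by rw [hk, hm]; push_cast; ring⟩
    · exact Or.inr ⟨hl, m, by rw [hk, hm]; push_cast; ring⟩
  -- a δ-odd vector μ exists since δ/2 ∉ L
  have hμ : ∃ μ, μ ∈ L ∧ ∃ j : ℤ, dot δ μ = 2 * (j : ℝ) + 1 := by
    rw [hLd] at hδ2
    simp only [dualSet, Set.mem_setOf_eq, not_forall] at hδ2
    obtain ⟨μ, hμL, hμne⟩ := hδ2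
    refine ⟨μ, hμL, ?_⟩
    obtain ⟨k, hk⟩ := hδint μ hμL
    rcases Int.even_or_odd k with ⟨m, hm⟩ | ⟨m, hm⟩
    · exfalso
      exact hμne ⟨m, by
        rw [dot_smul_right, dot_comm' δ μ] at *
        rw [hk, hm]; push_cast; ring⟩
    · exact ⟨m, by rw [hk, hm]; push_cast; ring⟩
  obtain ⟨μ, hμL, j₀, hμodd⟩ := hμ
  -- key: integral pairing with Λ_even and with μ implies membership in L
  have hkey : ∀ x, (∀ l ∈ deltaEven L δ, ∃ k : ℤ, dot l x = (k : ℝ)) →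
      (∃ k : ℤ, dot μ x = (k : ℝ)) → x ∈ L := by
    intro x hx ⟨kμ, hkμ⟩
    rw [hLd]
    intro l hl
    rcases hsplit l hl with he | ⟨-, a, ha⟩
    · exact hx l he
    · have hlμ : l - μ ∈ deltaEven L δ := by
        refine ⟨hsub l hl μ hμL, a - j₀, ?_⟩
        rw [dot_sub_right, ha, hμodd]; push_cast; ring
      obtain ⟨k1, h1⟩ := hx (l - μ) hlμ
      refine ⟨k1 + kμ, ?_⟩
      have := dot_sub_left l μ x
      rw [h1] at this
      have : dot l x = (k1 : ℝ) + dot μ x := by linarith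
      rw [this, hkμ]; push_cast; ring
  -- doubles of elements of L are δ-even
  have hdouble : ∀ l ∈ L, l + l ∈ deltaEven L δ := by
    intro l hl
    have hll : l + l ∈ L := by
      have := hsub l hl (0 - l) (hsub 0 (by
        rw [hLd]; intro m hm; exact ⟨0, by simp [dot]⟩) l hl)
      simpa [sub_sub_cancel, two_mul] using this
    obtain ⟨k, hk⟩ := hδint l hl
    exact ⟨hll, k, by rw [dot_add_right, hk]; ring⟩
  -- main decomposition: mutual inclusion
  refine ⟨Set.Subset.antisymm ?_ ?_, ?_, ?_, ?_, ?_, ?_, ?_⟩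
  · -- ⊆ : x in dual of Λ_even lands in one of the four cosets
    intro x hx
    have hx' : ∀ l ∈ deltaEven L δ, ∃ k : ℤ, dot l x = (k : ℝ) := hx
    -- 2x ∈ L
    have h2x : x + x ∈ L := by
      rw [hLd]
      intro l hl
      obtain ⟨k, hk⟩ := hx' (l + l) (hdouble l hl)
      refine ⟨k, ?_⟩
      rw [dot_add_right]
      rw [dot_add_left] at hk
      linarith
    obtain ⟨m, hm⟩ := hdual (x + x) h2x μ hμL
    rw [dot_add_right] at hm
    rcases Int.even_or_odd m with ⟨j, hj⟩ | ⟨j, hj⟩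
    · -- dot μ x ∈ ℤ, so x ∈ L
      have hμx : dot μ x = (j : ℝ) := by
        rw [hj] at hm; push_cast at hm; linarith
      have hxL : x ∈ L := hkey x hx' ⟨j, hμx⟩
      rcases hsplit x hxL with h | h
      · exact Or.inl (Or.inl (Or.inl h))
      · exact Or.inl (Or.inl (Or.inr h))
    · -- dot μ x ∈ ℤ + 1/2, so x - δ/2 ∈ L
      have hμx : dot μ x = (j : ℝ) + 1 / 2 := by
        rw [hj] at hm; push_cast at hm; linarith
      set v : Fin n → ℝ := (2 : ℝ)⁻¹ • δ with hv
      have hy : x - v ∈ L := by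
        apply hkey
        · intro l ⟨hlL, a, ha⟩
          obtain ⟨k, hk⟩ := hx' l ⟨hlL, a, ha⟩
          refine ⟨k - a, ?_⟩
          have hlv : dot l v = (a : ℝ) := by
            rw [hv, dot_smul_right, dot_comm' l δ, ha]; ring
          rw [dot_sub_right, hk, hlv]; push_cast; ring
        · refine ⟨j - j₀, ?_⟩
          have hμv : dot μ v = (j₀ : ℝ) + 1 / 2 := by
            rw [hv, dot_smul_right, dot_comm' μ δ, hμodd]; ring
          rw [dot_sub_right, hμx, hμv]; push_cast; ring
      have hxy : (x - v) + v = x := by abel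
      rcases hsplit (x - v) hy with h | h
      · exact Or.inl (Or.inr ⟨x - v, h, hxy⟩)
      · exact Or.inr ⟨x - v, h, hxy⟩
  · -- ⊇ : each coset pairs integrally with Λ_even
    rintro x (((⟨hxL, -⟩ | ⟨hxL, -⟩) | ⟨a, ⟨haL, k, hak⟩, rfl⟩) | ⟨a, ⟨haL, k, hak⟩, rfl⟩) <;>
      intro l hl
    · exact hdual x hxL l hl.1
    · exact hdual x hxL l hl.1
    · obtain ⟨k', hk'⟩ := hdual a haL l hl.1
      obtain ⟨-, b, hb⟩ := hl
      refine ⟨k' + b, ?_⟩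
      have hlv : dot l ((2 : ℝ)⁻¹ • δ) = (b : ℝ) := by
        rw [dot_smul_right, dot_comm' l δ, hb]; ring
      rw [dot_add_right, hk', hlv]; push_cast; ring
    · obtain ⟨k', hk'⟩ := hdual a haL l hl.1
      obtain ⟨-, b, hb⟩ := hl
      refine ⟨k' + b, ?_⟩
      have hlv : dot l ((2 : ℝ)⁻¹ • δ) = (b : ℝ) := by
        rw [dot_smul_right, dot_comm' l δ, hb]; ring
      rw [dot_add_right, hk', hlv]; push_cast; ring
  -- disjointness facts
  · rw [Set.disjoint_left]
    rintro x ⟨-, k, hk⟩ ⟨-, k', hk'⟩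
    have : (2 * k : ℝ) = 2 * k' + 1 := by rw [← hk, ← hk']
    have : (2 * k : ℤ) = 2 * k' + 1 := by exact_mod_cast this
    omega
  · rw [Set.disjoint_left]
    rintro x ⟨hxL, -⟩ ⟨a, ⟨haL, -⟩, rfl⟩
    exact hδ2 (by simpa using hsub (a + (2 : ℝ)⁻¹ • δ) hxL a haL)
  · rw [Set.disjoint_left]
    rintro x ⟨hxL, -⟩ ⟨a, ⟨haL, -⟩, rfl⟩
    exact hδ2 (by simpa using hsub (a + (2 : ℝ)⁻¹ • δ) hxL a haL)
  · rw [Set.disjoint_left]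
    rintro x ⟨hxL, -⟩ ⟨a, ⟨haL, -⟩, rfl⟩
    exact hδ2 (by simpa using hsub (a + (2 : ℝ)⁻¹ • δ) hxL a haL)
  · rw [Set.disjoint_left]
    rintro x ⟨hxL, -⟩ ⟨a, ⟨haL, -⟩, rfl⟩
    exact hδ2 (by simpa using hsub (a + (2 : ℝ)⁻¹ • δ) hxL a haL)
  · rw [Set.disjoint_left]
    rintro x ⟨a, ⟨-, k, hk⟩, rfl⟩ ⟨b, ⟨-, k', hk'⟩, hab⟩
    have hab' : b = a := by
      have := add_right_cancel hab
      exact this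
    rw [hab'] at hk'
    have : (2 * k : ℝ) = 2 * k' + 1 := by rw [← hk, ← hk']
    have : (2 * k : ℤ) = 2 * k' + 1 := by exact_mod_cast this
    omega

end PaperFormal
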